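/- For any nonnegative measurable functions G, H : [0,1) → [0,∞) and n ∈ ℕ, one has A_{2n−1}(G+H)² ≤ 2[Aₙ(G)² + Aₙ(H)²]. -/

import Mathlib

open MeasureTheory Set

/-- A partition `0 = t₀ < t₁ < ⋯ < tₙ = 1` of `[0,1]`. -/
def IsPartition (n : ℕ) (t : ℕ → ℝ) : Prop :=
  t 0 = 0 ∧ t n = 1 ∧ ∀ i < n, t i < t (i + 1)

/-- `A(H,τ)² = ∑_{i=1}^n ∫_{t_{i-1}}^{t_i} (tᵢ − s) H(s)² ds`. -/
noncomputable def partErr (H : ℝ → ℝ) (n : ℕ) (t : ℕ → ℝ) : ℝ :=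
  ∑ i ∈ Finset.range n, ∫ s in (t i)..(t (i + 1)), (t (i + 1) - s) * H s ^ 2

/-- `Aₙ(H) = inf_{τ ∈ 𝒯ₙ} A(H,τ)`. -/
noncomputable def An (H : ℝ → ℝ) (n : ℕ) : ℝ :=
  sInf { x | ∃ t : ℕ → ℝ, IsPartition n t ∧ x = Real.sqrt (partErr H n t) }

/-! Merge near-optimal partitions `g` of `G` and `h` of `H`: together they have at most `2n`
points, hence at most `2n - 1` cells, and on a common cell `(G + H)² ≤ 2G² + 2H²`. The junk
value of the Bochner integral complicates this: `partErr` counts a non-integrable cell as `0`.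
Points strictly inside such a bad cell of `g` or `h` are discarded, so that every merged cell
either contains a bad cell, on which `G + H ≥ G, H ≥ 0` is non-integrable as well, or lies inside
good cells of both. Finally `Aₙ` is antitone in `n`, which pads the merged partition to exactly
`2n - 1` cells: splitting a cell costs at most `ε`, by absolute continuity of the integral when
the cell is bad. -/

open scoped ENNReal

/-- The cell term of `partErr` as a lower Lebesgue integral. Unlike the Bochner integral in
`partErr`, which is `0` on a non-integrable cell, it is `⊤` there. -/
noncomputable def cellErr (F : ℝ → ℝ) (a b : ℝ) : ℝ≥0∞ :=
  ∫⁻ s in Ioc a b, ENNReal.ofReal ((b - s) * F s ^ 2)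

section cellErr

variable {F : ℝ → ℝ} {a b c x : ℝ}

theorem integral_eq_toReal_cellErr (hF : Measurable F) (hab : a ≤ b) :
    ∫ s in a..b, (b - s) * F s ^ 2 = (cellErr F a b).toReal := by
  rw [intervalIntegral.integral_of_le hab, cellErr]
  refine integral_eq_lintegral_of_nonneg_ae ?_ (by fun_prop)
  filter_upwards [ae_restrict_mem measurableSet_Ioc] with s hs
  exact mul_nonneg (sub_nonneg.mpr hs.2) (sq_nonneg _)

theorem cellErr_mono {a' b' : ℝ} (F : ℝ → ℝ) (ha : a' ≤ a) (hb : b ≤ b') :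
    cellErr F a b ≤ cellErr F a' b' :=
  lintegral_mono' (Measure.restrict_mono (Ioc_subset_Ioc ha hb) le_rfl) fun s =>
    ENNReal.ofReal_le_ofReal (mul_le_mul_of_nonneg_right (by linarith) (sq_nonneg _))

theorem cellErr_add_cellErr_le (hax : a ≤ x) (hxb : x ≤ b) :
    cellErr F a x + cellErr F x b ≤ cellErr F a b := by
  rw [cellErr, cellErr, cellErr, ← Ioc_union_Ioc_eq_Ioc hax hxb,
    lintegral_union measurableSet_Ioc (Ioc_disjoint_Ioc_of_le le_rfl)]
  gcongr

theorem cellErr_le_cellErr_add {F' : ℝ → ℝ} (hF : ∀ s ∈ Ico (0 : ℝ) 1, 0 ≤ F s)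
    (hF' : ∀ s ∈ Ico (0 : ℝ) 1, 0 ≤ F' s) (ha : 0 ≤ a) (hb : b ≤ 1) :
    cellErr F a b ≤ cellErr (fun s => F s + F' s) a b := by
  simp only [cellErr, ← setLIntegral_congr (Ioo_ae_eq_Ioc (μ := volume))]
  refine setLIntegral_mono' measurableSet_Ioo fun s hs => ENNReal.ofReal_le_ofReal ?_
  have hs01 : s ∈ Ico (0 : ℝ) 1 := ⟨ha.trans hs.1.le, hs.2.trans_le hb⟩
  have := hF s hs01
  have := hF' s hs01
  exact mul_le_mul_of_nonneg_left (by nlinarith) (sub_nonneg.mpr hs.2.le)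

theorem cellErr_add_eq_top {F' : ℝ → ℝ} (hF : ∀ s ∈ Ico (0 : ℝ) 1, 0 ≤ F s)
    (hF' : ∀ s ∈ Ico (0 : ℝ) 1, 0 ≤ F' s) (ha : 0 ≤ a) (hb : b ≤ 1) {p q : ℝ} (hp : a ≤ p)
    (hq : q ≤ b) (htop : cellErr F p q = ⊤) : cellErr (fun s => F s + F' s) a b = ⊤ :=
  top_le_iff.mp (htop ▸ (cellErr_mono F hp hq).trans (cellErr_le_cellErr_add hF hF' ha hb))

theorem cellErr_add_le {G H : ℝ → ℝ} (hG : Measurable G) (a b : ℝ) :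
    cellErr (fun s => G s + H s) a b ≤ 2 * cellErr G a b + 2 * cellErr H a b := by
  rw [cellErr, cellErr, cellErr, ← lintegral_const_mul _ (by fun_prop),
    ← lintegral_const_mul' _ _ (by simp), ← lintegral_add_left (by fun_prop)]
  refine lintegral_mono fun s => ?_
  rw [← ENNReal.ofReal_ofNat 2, ← ENNReal.ofReal_mul zero_le_two,
    ← ENNReal.ofReal_mul zero_le_two]
  refine (ENNReal.ofReal_le_ofReal_iff'.mpr ?_).trans ENNReal.ofReal_add_le
  rcases le_total 0 (b - s) with h | h
  · left; nlinarith [sq_nonneg (G s - H s)]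
  · right; exact mul_nonpos_of_nonpos_of_nonneg h (sq_nonneg _)

theorem sum_cellErr_le {t : ℕ → ℝ} (ht : Monotone t) (S : Finset ℕ)
    (hS : ∀ i ∈ S, a ≤ t i ∧ t (i + 1) ≤ b) :
    ∑ i ∈ S, cellErr F (t i) (t (i + 1)) ≤ cellErr F a b := by
  calc ∑ i ∈ S, cellErr F (t i) (t (i + 1))
      ≤ ∑ i ∈ S, ∫⁻ s in Ioc (t i) (t (i + 1)), ENNReal.ofReal ((b - s) * F s ^ 2) := by
        gcongr with i hi
        refine setLIntegral_mono' measurableSet_Ioc fun s hs => ENNReal.ofReal_le_ofReal ?_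
        exact mul_le_mul_of_nonneg_right (by linarith [(hS i hi).2, hs.2]) (sq_nonneg _)
    _ = ∫⁻ s in ⋃ i ∈ S, Ioc (t i) (t (i + 1)), ENNReal.ofReal ((b - s) * F s ^ 2) :=
        (lintegral_biUnion_finset (ht.pairwise_disjoint_on_Ioc_succ.set_pairwise _)
          (fun _ _ => measurableSet_Ioc) _).symm
    _ ≤ cellErr F a b :=
        lintegral_mono_set (iUnion₂_subset fun i hi => Ioc_subset_Ioc (hS i hi).1 (hS i hi).2)

theorem exists_setLIntegral_Ioc_lt {f : ℝ → ℝ≥0∞} (hf : ∫⁻ s in Ioc a b, f s ≠ ⊤) {ε : ℝ≥0∞}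
    (hε : ε ≠ 0) :
    ∃ δ > 0, ∀ x y, a ≤ x → y ≤ b → y - x < δ → ∫⁻ s in Ioc x y, f s < ε := by
  obtain ⟨δ, hδ, hsmall⟩ := exists_pos_setLIntegral_lt_of_measure_lt hf hε
  obtain ⟨r, -, hr0, hrδ⟩ := ENNReal.lt_iff_exists_real_btwn.mp hδ
  have hr : 0 < r := ENNReal.ofReal_pos.mp hr0
  refine ⟨r, hr, fun x y hax hyb hxy => ?_⟩
  have hvol : volume.restrict (Ioc a b) (Ioc x y) < δ :=
    calc volume.restrict (Ioc a b) (Ioc x y) ≤ volume (Ioc x y) := Measure.restrict_apply_le _ _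
      _ = ENNReal.ofReal (y - x) := Real.volume_Ioc
      _ < ENNReal.ofReal r := (ENNReal.ofReal_lt_ofReal_iff hr).mpr hxy
      _ < δ := hrδ
  simpa [Measure.restrict_restrict measurableSet_Ioc,
    inter_eq_left.mpr (Ioc_subset_Ioc hax hyb)] using hsmall _ hvol

theorem exists_cellErr_left_le (hab : a < b) (hfin : cellErr F a b ≠ ⊤) {ε : ℝ} (hε : 0 < ε) :
    ∃ x ∈ Ioo a b, (cellErr F a x).toReal ≤ ε := by
  obtain ⟨δ, hδ, hsmall⟩ := exists_setLIntegral_Ioc_lt hfin (ENNReal.ofReal_pos.mpr hε).ne'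
  have hm : 0 < min δ (b - a) := lt_min hδ (sub_pos.mpr hab)
  have hx : a + min δ (b - a) / 2 ∈ Ioo a b :=
    ⟨by linarith, by linarith [min_le_right δ (b - a)]⟩
  refine ⟨_, hx, ENNReal.toReal_le_of_le_ofReal hε.le ?_⟩
  calc cellErr F a (a + min δ (b - a) / 2)
      ≤ ∫⁻ s in Ioc a (a + min δ (b - a) / 2), ENNReal.ofReal ((b - s) * F s ^ 2) :=
        lintegral_mono fun s =>
          ENNReal.ofReal_le_ofReal (mul_le_mul_of_nonneg_right (by linarith [hx.2]) (sq_nonneg _))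
    _ ≤ ENNReal.ofReal ε :=
        (hsmall _ _ le_rfl hx.2.le (by linarith [min_le_left δ (b - a)])).le

theorem exists_cellErr_right_le (hab : a < b) (hfin : cellErr F a b ≠ ⊤) {ε : ℝ} (hε : 0 < ε) :
    ∃ x ∈ Ioo a b, (cellErr F x b).toReal ≤ ε := by
  obtain ⟨δ, hδ, hsmall⟩ := exists_setLIntegral_Ioc_lt hfin (ENNReal.ofReal_pos.mpr hε).ne'
  have hm : 0 < min δ (b - a) := lt_min hδ (sub_pos.mpr hab)
  have hx : b - min δ (b - a) / 2 ∈ Ioo a b :=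
    ⟨by linarith [min_le_right δ (b - a)], by linarith⟩
  exact ⟨_, hx, ENNReal.toReal_le_of_le_ofReal hε.le
    (hsmall _ _ hx.1.le le_rfl (by linarith [min_le_left δ (b - a)])).le⟩

theorem cellErr_ne_top_of_overlap {y : ℝ} (hax : a ≤ x) (hxy : x < y) (hyc : y ≤ c)
    (hL : cellErr F a y ≠ ⊤) (hR : cellErr F x c ≠ ⊤) : cellErr F a c ≠ ⊤ := by
  set K := (c - x) / (y - x)
  have hK : ∀ s ∈ Ioc a x, ENNReal.ofReal ((c - s) * F s ^ 2)
      ≤ ENNReal.ofReal K * ENNReal.ofReal ((y - s) * F s ^ 2) := fun s hs => by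
    have hKs : c - s ≤ K * (y - s) := by
      rw [div_mul_eq_mul_div, le_div_iff₀ (sub_pos.mpr hxy)]
      nlinarith [hs.2]
    rw [← ENNReal.ofReal_mul (div_nonneg (by linarith) (by linarith)), ← mul_assoc]
    exact ENNReal.ofReal_le_ofReal (mul_le_mul_of_nonneg_right hKs (sq_nonneg _))
  have hsplit : cellErr F a c ≤ ENNReal.ofReal K * cellErr F a y + cellErr F x c := by
    rw [cellErr, ← Ioc_union_Ioc_eq_Ioc hax (hxy.le.trans hyc),
      lintegral_union measurableSet_Ioc (Ioc_disjoint_Ioc_of_le le_rfl)]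
    refine add_le_add ?_ le_rfl
    calc ∫⁻ s in Ioc a x, ENNReal.ofReal ((c - s) * F s ^ 2)
        ≤ ∫⁻ s in Ioc a x, ENNReal.ofReal K * ENNReal.ofReal ((y - s) * F s ^ 2) :=
          setLIntegral_mono' measurableSet_Ioc hK
      _ = ENNReal.ofReal K * ∫⁻ s in Ioc a x, ENNReal.ofReal ((y - s) * F s ^ 2) :=
          lintegral_const_mul' _ _ ENNReal.ofReal_ne_top
      _ ≤ ENNReal.ofReal K * cellErr F a y := by
          gcongr
          exact lintegral_mono_set (Ioc_subset_Ioc_right hxy.le)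
  exact ne_top_of_le_ne_top (by finiteness) hsplit

theorem exists_cellErr_split (hac : a < c) {ε : ℝ} (hε : 0 < ε) :
    ∃ x ∈ Ioo a c,
      (cellErr F a x).toReal + (cellErr F x c).toReal ≤ (cellErr F a c).toReal + ε := by
  obtain ⟨y, hy⟩ := nonempty_Ioo.mpr hac
  by_cases hfin : cellErr F a c = ⊤
  swap
  · have h := cellErr_add_cellErr_le (F := F) hy.1.le hy.2.le
    refine ⟨y, hy, ?_⟩
    rw [← ENNReal.toReal_add (ne_top_of_le_ne_top hfin (le_self_add.trans h))
      (ne_top_of_le_ne_top hfin (le_add_self.trans h))]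
    linarith [ENNReal.toReal_mono hfin h]
  rw [hfin, ENNReal.toReal_top, zero_add]
  by_cases hL : cellErr F a y = ⊤
  · by_cases hR : cellErr F y c = ⊤
    · exact ⟨y, hy, by simp [hL, hR, hε.le]⟩
    obtain ⟨x, hx, hxε⟩ := exists_cellErr_right_le hy.2 hR hε
    have hLx : cellErr F a x = ⊤ := top_le_iff.mp (hL ▸ cellErr_mono F le_rfl hx.1.le)
    exact ⟨x, ⟨hy.1.trans hx.1, hx.2⟩, by simpa [hLx] using hxε⟩
  · obtain ⟨x, hx, hxε⟩ := exists_cellErr_left_le hy.1 hL hε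
    have hRx : cellErr F x c = ⊤ := by
      by_contra hR
      exact cellErr_ne_top_of_overlap hx.1.le hx.2 hy.2.le hL hR hfin
    exact ⟨x, ⟨hx.1, hx.2.trans hy.2⟩, by simpa [hRx] using hxε⟩

end cellErr

section partition

variable {F : ℝ → ℝ} {m n : ℕ} {t : ℕ → ℝ}

theorem IsPartition.one_le (ht : IsPartition n t) : 1 ≤ n :=
  Nat.one_le_iff_ne_zero.mpr fun hn => zero_ne_one (ht.1.symm.trans (hn ▸ ht.2.1))

theorem exists_isPartition (hn : 1 ≤ n) : ∃ t, IsPartition n t := by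
  have hn' : (0 : ℝ) < n := by exact_mod_cast hn
  refine ⟨fun i => i / n, by simp, by simp [hn'.ne'], fun i _ => ?_⟩
  simp only [Nat.cast_succ]
  gcongr
  exact lt_add_one _

theorem IsPartition.strictMonoOn (ht : IsPartition n t) : StrictMonoOn t (Iic n) :=
  strictMonoOn_Iic_of_lt_succ fun i hi => by simpa using ht.2.2 i hi

theorem IsPartition.mem_Icc (ht : IsPartition n t) {i : ℕ} (hi : i ≤ n) : t i ∈ Icc 0 1 := by
  have hmono := ht.strictMonoOn.monotoneOn
  exact ⟨ht.1 ▸ hmono (Nat.zero_le n) hi (Nat.zero_le i), ht.2.1 ▸ hmono hi (le_refl n) hi⟩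

theorem partErr_nonneg (ht : IsPartition n t) : 0 ≤ partErr F n t :=
  Finset.sum_nonneg fun i hi => intervalIntegral.integral_nonneg
    (ht.2.2 i (Finset.mem_range.mp hi)).le fun _ hs =>
      mul_nonneg (sub_nonneg.mpr hs.2) (sq_nonneg _)

theorem partErr_eq_sum_cellErr (hF : Measurable F) (ht : ∀ i < n, t i ≤ t (i + 1)) :
    partErr F n t = ∑ i ∈ Finset.range n, (cellErr F (t i) (t (i + 1))).toReal :=
  Finset.sum_congr rfl fun i hi =>
    integral_eq_toReal_cellErr hF (ht i (Finset.mem_range.mp hi))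

theorem An_sq_le_partErr (ht : IsPartition n t) : An F n ^ 2 ≤ partErr F n t := by
  have hA : An F n ≤ Real.sqrt (partErr F n t) :=
    csInf_le ⟨0, by rintro _ ⟨_, _, rfl⟩; exact Real.sqrt_nonneg _⟩ ⟨t, ht, rfl⟩
  have hA0 : 0 ≤ An F n := Real.sInf_nonneg (by rintro _ ⟨_, _, rfl⟩; exact Real.sqrt_nonneg _)
  calc An F n ^ 2 ≤ Real.sqrt (partErr F n t) ^ 2 := pow_le_pow_left₀ hA0 hA 2
    _ = partErr F n t := Real.sq_sqrt (partErr_nonneg ht)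

theorem le_An_sq {x : ℝ} (hn : 1 ≤ n) (h : ∀ t, IsPartition n t → x ≤ partErr F n t) :
    x ≤ An F n ^ 2 := by
  obtain ⟨t₀, ht₀⟩ := exists_isPartition hn
  have hA : Real.sqrt x ≤ An F n :=
    le_csInf ⟨_, t₀, ht₀, rfl⟩ (by rintro _ ⟨t, ht, rfl⟩; exact Real.sqrt_le_sqrt (h t ht))
  exact (Real.sqrt_le_iff.mp hA).2

theorem exists_partErr_succ_le (hF : Measurable F) (ht : IsPartition m t) {ε : ℝ} (hε : 0 < ε) :
    ∃ t', IsPartition (m + 1) t' ∧ partErr F (m + 1) t' ≤ partErr F m t + ε := by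
  obtain ⟨k, rfl⟩ : ∃ k, m = k + 1 := ⟨m - 1, by have := ht.one_le; omega⟩
  obtain ⟨x, hx, hxε⟩ := exists_cellErr_split (F := F) (ht.2.2 0 k.succ_pos) hε
  obtain ⟨t', h0, h1, h2⟩ : ∃ t' : ℕ → ℝ, t' 0 = t 0 ∧ t' 1 = x ∧ ∀ i, t' (i + 2) = t (i + 1) :=
    ⟨fun | 0 => t 0 | 1 => x | i + 2 => t (i + 1), rfl, rfl, fun _ => rfl⟩
  refine ⟨t', ⟨h0.trans ht.1, (h2 k).trans ht.2.1, fun i hi => ?_⟩, ?_⟩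
  · rcases i with _ | _ | i
    · simpa [h0, h1] using hx.1
    · simpa [h1, h2] using hx.2
    · simpa [h2] using ht.2.2 (i + 1) (by omega)
  · simp only [partErr, Finset.sum_range_succ', h0, h1, h2]
    rw [integral_eq_toReal_cellErr hF hx.1.le, integral_eq_toReal_cellErr hF hx.2.le,
      integral_eq_toReal_cellErr hF (ht.2.2 0 k.succ_pos).le]
    linarith

theorem An_sq_antitone (hF : Measurable F) (hm : 1 ≤ m) {k : ℕ} (hmk : m ≤ k) :
    An F k ^ 2 ≤ An F m ^ 2 := by
  induction k, hmk using Nat.le_induction with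
  | base => exact le_rfl
  | succ k hmk ih =>
    refine le_trans ?_ ih
    refine le_An_sq (hm.trans hmk) fun t ht => le_of_forall_pos_le_add fun ε hε => ?_
    obtain ⟨t', ht', hle⟩ := exists_partErr_succ_le hF ht hε
    exact (An_sq_le_partErr ht').trans hle

end partition

section merge

theorem exists_isPartition_range_eq (Q : Finset ℝ) (h0 : 0 ∈ Q) (h1 : 1 ∈ Q)
    (hQ : ∀ x ∈ Q, x ∈ Icc (0 : ℝ) 1) :
    ∃ t, IsPartition (Q.card - 1) t ∧ Monotone t ∧ range t = Q := by
  have hN : 2 ≤ Q.card := by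
    simpa using Finset.card_le_card (Finset.insert_subset h0 (Finset.singleton_subset_iff.mpr h1))
  set e := Q.orderEmbOfFin rfl
  set t : ℕ → ℝ := fun i => e ⟨min i (Q.card - 1), by omega⟩
  have hmono : Monotone t := fun i j hij => e.monotone (Fin.mk_le_mk.mpr (min_le_min_right _ hij))
  have hrange : range t = Q := by
    rw [← Q.range_orderEmbOfFin rfl]
    refine Subset.antisymm (range_subset_iff.mpr fun i => mem_range_self _) ?_
    rintro _ ⟨k, rfl⟩
    exact ⟨k, congrArg e (Fin.ext (Nat.min_eq_left (by omega)))⟩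
  have htQ : ∀ i, t i ∈ Icc 0 1 := fun i => hQ _ (by simp [t, e])
  refine ⟨t, ⟨?_, ?_, fun i hi => e.strictMono (Fin.mk_lt_mk.mpr (by omega))⟩, hmono, hrange⟩
  · obtain ⟨k, hk⟩ : (0 : ℝ) ∈ range t := hrange ▸ h0
    exact le_antisymm (hk ▸ hmono (Nat.zero_le k)) (htQ 0).1
  · obtain ⟨k, hk⟩ : (1 : ℝ) ∈ range t := hrange ▸ h1
    exact le_antisymm (htQ _).2 (hk ▸ e.monotone (Fin.mk_le_mk.mpr (by omega)))

theorem exists_isPartition_avoiding (M : Finset ℝ) (h0 : 0 ∈ M) (h1 : 1 ∈ M)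
    (hM : ∀ x ∈ M, x ∈ Icc (0 : ℝ) 1) (B : Set (ℝ × ℝ)) (hB : ∀ I ∈ B, 0 ≤ I.1 ∧ I.2 ≤ 1) :
    ∃ m t, m + 1 ≤ M.card ∧ IsPartition m t ∧ Monotone t ∧ ∀ i < m,
      (∃ I ∈ B, t i ≤ I.1 ∧ I.2 ≤ t (i + 1)) ∨
      ((∀ x ∈ M, x ∉ Ioo (t i) (t (i + 1))) ∧ ∀ I ∈ B, I.2 ≤ t i ∨ t (i + 1) ≤ I.1) := by
  classical
  set Q := M.filter fun x => ∀ I ∈ B, x ∉ Ioo I.1 I.2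
  have hQ0 : (0 : ℝ) ∈ Q := Finset.mem_filter.mpr ⟨h0, fun I hI hx => (hB I hI).1.not_gt hx.1⟩
  have hQ1 : (1 : ℝ) ∈ Q := Finset.mem_filter.mpr ⟨h1, fun I hI hx => (hB I hI).2.not_gt hx.2⟩
  obtain ⟨t, ht, hmono, hrange⟩ :=
    exists_isPartition_range_eq Q hQ0 hQ1 fun x hx => hM x (Finset.mem_filter.mp hx).1
  have htQ : ∀ i, t i ∈ Q := fun i => by
    have := mem_range_self (f := t) i
    rwa [hrange] at this
  have hgap : ∀ i, ∀ x ∈ Q, x ∉ Ioo (t i) (t (i + 1)) := by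
    rintro i x hx ⟨hix, hxi⟩
    obtain ⟨k, rfl⟩ : x ∈ range t := by simpa [hrange] using hx
    have := hmono.reflect_lt hix
    have := hmono.reflect_lt hxi
    omega
  have hcard : Q.card - 1 + 1 ≤ M.card := by
    have := Finset.card_pos.mpr ⟨0, hQ0⟩
    have : Q.card ≤ M.card := Finset.card_filter_le _ _
    omega
  refine ⟨Q.card - 1, t, hcard, ht, hmono, fun i hi => ?_⟩
  by_cases hover : ∃ I ∈ B, t i < I.2 ∧ I.1 < t (i + 1)
  · obtain ⟨I, hI, hiI, hIi⟩ := hover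
    refine Or.inl ⟨I, hI, not_lt.mp fun h => ?_, not_lt.mp fun h => ?_⟩
    · exact (Finset.mem_filter.mp (htQ i)).2 I hI ⟨h, hiI⟩
    · exact (Finset.mem_filter.mp (htQ (i + 1))).2 I hI ⟨hIi, h⟩
  push Not at hover
  refine Or.inr ⟨fun x hx hxi => ?_, fun I hI => ?_⟩
  · by_cases hxQ : x ∈ Q
    · exact hgap i x hxQ hxi
    obtain ⟨I, hI, hxI⟩ : ∃ I ∈ B, x ∈ Ioo I.1 I.2 := by simpa [Q, hx] using hxQ
    linarith [hover I hI (hxi.1.trans hxI.2), hxI.1, hxi.2]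
  · exact (le_or_gt I.2 (t i)).imp_right (hover I hI)

variable {n : ℕ} {g h : ℕ → ℝ}

theorem IsPartition.exists_cell (hg : IsPartition n g) (P : ℕ → Prop) {a c : ℝ} (hac : a < c)
    (ha : 0 ≤ a) (hc : c ≤ 1) (hgap : ∀ j ≤ n, g j ∉ Ioo a c)
    (hP : ∀ j < n, P j → g (j + 1) ≤ a ∨ c ≤ g j) :
    ∃ j < n, ¬ P j ∧ g j ≤ a ∧ c ≤ g (j + 1) := by
  classical
  set j := Nat.findGreatest (fun j => g j ≤ a) n
  have hj : g j ≤ a :=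
    Nat.findGreatest_spec (P := fun j => g j ≤ a) (Nat.zero_le n) (by rw [hg.1]; exact ha)
  have hjn : j < n := lt_of_le_of_ne (Nat.findGreatest_le n) fun hjn => by
    rw [hjn, hg.2.1] at hj
    linarith
  have hj1 : a < g (j + 1) := not_le.mp (Nat.findGreatest_is_greatest (Nat.lt_succ_self j) hjn)
  have hcj : c ≤ g (j + 1) := not_lt.mp fun hc => hgap (j + 1) hjn ⟨hj1, hc⟩
  refine ⟨j, hjn, fun hPj => ?_, hj, hcj⟩
  rcases hP j hjn hPj with h | h <;> linarith

theorem IsPartition.card_image_union_le (hg : IsPartition n g) (hh : IsPartition n h) :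
    ((Finset.range (n + 1)).image g ∪ (Finset.range (n + 1)).image h).card ≤ 2 * n := by
  have h01 : ({0, 1} : Finset ℝ) ⊆ (Finset.range (n + 1)).image g ∩ (Finset.range (n + 1)).image h := by
    simp only [Finset.insert_subset_iff, Finset.singleton_subset_iff, Finset.mem_inter,
      Finset.mem_image, Finset.mem_range]
    exact ⟨⟨⟨0, by omega, hg.1⟩, ⟨0, by omega, hh.1⟩⟩, ⟨n, by omega, hg.2.1⟩, ⟨n, by omega, hh.2.1⟩⟩
  have := Finset.card_union_add_card_inter ((Finset.range (n + 1)).image g) ((Finset.range (n + 1)).image h)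
  have := Finset.card_le_card h01
  have := (Finset.range (n + 1)).card_image_le (f := g)
  have := (Finset.range (n + 1)).card_image_le (f := h)
  simp only [Finset.card_range] at *
  rw [Finset.card_pair zero_ne_one] at *
  omega

variable {F G H : ℝ → ℝ} {m : ℕ} {t : ℕ → ℝ}

theorem sum_toReal_cellErr_le (ht : Monotone t) (S : Finset ℕ)
    (hS : ∀ i ∈ S, ∃ j < n, cellErr F (g j) (g (j + 1)) ≠ ⊤ ∧ g j ≤ t i ∧ t (i + 1) ≤ g (j + 1)) :
    ∑ i ∈ S, (cellErr F (t i) (t (i + 1))).toReal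
      ≤ ∑ j ∈ Finset.range n, (cellErr F (g j) (g (j + 1))).toReal := by
  classical
  choose! φ hφn hφfin hφl hφr using hS
  rw [← Finset.sum_fiberwise_of_maps_to (g := φ) (t := Finset.range n)
    fun i hi => Finset.mem_range.mpr (hφn i hi)]
  refine Finset.sum_le_sum fun j _ => ?_
  rcases (S.filter fun i => φ i = j).eq_empty_or_nonempty with hempty | ⟨i₀, hi₀⟩
  · simp [hempty]
  obtain ⟨hi₀S, rfl⟩ := Finset.mem_filter.mp hi₀
  have hfin := hφfin i₀ hi₀S
  have hsum := sum_cellErr_le (F := F) ht (S.filter fun i => φ i = φ i₀) fun i hi => by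
    obtain ⟨hiS, hij⟩ := Finset.mem_filter.mp hi
    exact ⟨hij ▸ hφl i hiS, hij ▸ hφr i hiS⟩
  rw [← ENNReal.toReal_sum fun i hi => ne_top_of_le_ne_top hfin
    ((Finset.single_le_sum (fun _ _ => zero_le) hi).trans hsum)]
  exact ENNReal.toReal_mono hfin hsum

theorem partErr_add_le (hGm : Measurable G) (hHm : Measurable H) (hg : IsPartition n g)
    (hh : IsPartition n h) (ht : IsPartition m t) (htm : Monotone t)
    (hcell : ∀ i < m, cellErr (fun s => G s + H s) (t i) (t (i + 1)) = ⊤ ∨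
      ((∃ j < n, cellErr G (g j) (g (j + 1)) ≠ ⊤ ∧ g j ≤ t i ∧ t (i + 1) ≤ g (j + 1)) ∧
        ∃ j < n, cellErr H (h j) (h (j + 1)) ≠ ⊤ ∧ h j ≤ t i ∧ t (i + 1) ≤ h (j + 1))) :
    partErr (fun s => G s + H s) m t ≤ 2 * partErr G n g + 2 * partErr H n h := by
  classical
  set S := (Finset.range m).filter fun i => cellErr (fun s => G s + H s) (t i) (t (i + 1)) ≠ ⊤
  have hgood := fun i (hi : i ∈ S) =>
    (hcell i (Finset.mem_range.mp (Finset.mem_filter.mp hi).1)).resolve_left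
      (Finset.mem_filter.mp hi).2
  rw [partErr_eq_sum_cellErr (by fun_prop : Measurable fun s => G s + H s) fun i hi => (ht.2.2 i hi).le,
    partErr_eq_sum_cellErr hGm fun i hi => (hg.2.2 i hi).le,
    partErr_eq_sum_cellErr hHm fun i hi => (hh.2.2 i hi).le,
    ← Finset.sum_filter_of_ne (p := fun i => cellErr (fun s => G s + H s) (t i) (t (i + 1)) ≠ ⊤)
      fun i _ hne htop => hne (by simp [htop])]
  calc ∑ i ∈ S, (cellErr (fun s => G s + H s) (t i) (t (i + 1))).toReal
      ≤ ∑ i ∈ S, (2 * (cellErr G (t i) (t (i + 1))).toReal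
          + 2 * (cellErr H (t i) (t (i + 1))).toReal) := by
        refine Finset.sum_le_sum fun i hi => ?_
        obtain ⟨⟨j, -, hj, hjl, hjr⟩, ⟨k, -, hk, hkl, hkr⟩⟩ := hgood i hi
        have hG := ne_top_of_le_ne_top hj (cellErr_mono G hjl hjr)
        have hH := ne_top_of_le_ne_top hk (cellErr_mono H hkl hkr)
        calc _ ≤ (2 * cellErr G (t i) (t (i + 1)) + 2 * cellErr H (t i) (t (i + 1))).toReal :=
              ENNReal.toReal_mono (by finiteness) (cellErr_add_le hGm _ _)
          _ = _ := by
              rw [ENNReal.toReal_add (by finiteness) (by finiteness)]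
              simp [ENNReal.toReal_mul]
    _ = 2 * ∑ i ∈ S, (cellErr G (t i) (t (i + 1))).toReal
          + 2 * ∑ i ∈ S, (cellErr H (t i) (t (i + 1))).toReal := by
        rw [Finset.sum_add_distrib, Finset.mul_sum, Finset.mul_sum]
    _ ≤ _ := by
        gcongr
        · exact sum_toReal_cellErr_le htm S fun i hi => (hgood i hi).1
        · exact sum_toReal_cellErr_le htm S fun i hi => (hgood i hi).2

theorem exists_partErr_add_le (hGm : Measurable G) (hHm : Measurable H)
    (hGpos : ∀ s ∈ Ico (0 : ℝ) 1, 0 ≤ G s) (hHpos : ∀ s ∈ Ico (0 : ℝ) 1, 0 ≤ H s)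
    (hg : IsPartition n g) (hh : IsPartition n h) :
    ∃ m t, m ≤ 2 * n - 1 ∧ IsPartition m t ∧
      partErr (fun s => G s + H s) m t ≤ 2 * partErr G n g + 2 * partErr H n h := by
  set M := (Finset.range (n + 1)).image g ∪ (Finset.range (n + 1)).image h
  set B : Set (ℝ × ℝ) := {I | ∃ j < n,
    (I = (g j, g (j + 1)) ∧ cellErr G (g j) (g (j + 1)) = ⊤) ∨
      (I = (h j, h (j + 1)) ∧ cellErr H (h j) (h (j + 1)) = ⊤)}
  have hgM : ∀ j ≤ n, g j ∈ M := fun j hj =>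
    Finset.mem_union_left _ (Finset.mem_image_of_mem g (Finset.mem_range.mpr (by omega)))
  have hhM : ∀ j ≤ n, h j ∈ M := fun j hj =>
    Finset.mem_union_right _ (Finset.mem_image_of_mem h (Finset.mem_range.mpr (by omega)))
  have hM : ∀ x ∈ M, x ∈ Icc (0 : ℝ) 1 := by
    simp only [M, Finset.mem_union, Finset.mem_image, Finset.mem_range]
    rintro x (⟨j, hj, rfl⟩ | ⟨j, hj, rfl⟩)
    exacts [hg.mem_Icc (by omega), hh.mem_Icc (by omega)]
  have hB : ∀ I ∈ B, 0 ≤ I.1 ∧ I.2 ≤ 1 := by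
    rintro _ ⟨j, hj, ⟨rfl, -⟩ | ⟨rfl, -⟩⟩
    exacts [⟨(hg.mem_Icc hj.le).1, (hg.mem_Icc hj).2⟩, ⟨(hh.mem_Icc hj.le).1, (hh.mem_Icc hj).2⟩]
  obtain ⟨m, t, hm, ht, htm, hcell⟩ := exists_isPartition_avoiding M
    (hg.1 ▸ hgM 0 (Nat.zero_le n)) (hg.2.1 ▸ hgM n le_rfl) hM B hB
  refine ⟨m, t, by have : M.card ≤ 2 * n := hg.card_image_union_le hh; omega, ht,
    partErr_add_le hGm hHm hg hh ht htm fun i hi => ?_⟩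
  have hti := ht.mem_Icc hi.le
  have hti1 := ht.mem_Icc (Nat.succ_le_of_lt hi)
  rcases hcell i hi with ⟨I, ⟨j, hj, ⟨rfl, hbad⟩ | ⟨rfl, hbad⟩⟩, hl, hr⟩ | ⟨hgap, hdisj⟩
  · exact Or.inl (cellErr_add_eq_top hGpos hHpos hti.1 hti1.2 hl hr hbad)
  · simpa only [add_comm (H _)] using
      Or.inl (cellErr_add_eq_top hHpos hGpos hti.1 hti1.2 hl hr hbad)
  · exact Or.inr ⟨hg.exists_cell _ (ht.2.2 i hi) hti.1 hti1.2 (fun j hj => hgap _ (hgM j hj))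
      fun j hj hbad => hdisj _ ⟨j, hj, Or.inl ⟨rfl, hbad⟩⟩,
    hh.exists_cell _ (ht.2.2 i hi) hti.1 hti1.2 (fun j hj => hgap _ (hhM j hj))
      fun j hj hbad => hdisj _ ⟨j, hj, Or.inr ⟨rfl, hbad⟩⟩⟩

end merge

theorem stmt11 (G H : ℝ → ℝ) (hGm : Measurable G) (hHm : Measurable H)
    (hGpos : ∀ t ∈ Ico (0 : ℝ) 1, 0 ≤ G t) (hHpos : ∀ t ∈ Ico (0 : ℝ) 1, 0 ≤ H t)
    (n : ℕ) (hn : 1 ≤ n) :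
    An (fun t => G t + H t) (2 * n - 1) ^ 2 ≤ 2 * (An G n ^ 2 + An H n ^ 2) := by
  set A := An (fun t => G t + H t) (2 * n - 1) ^ 2
  have hpair : ∀ g h, IsPartition n g → IsPartition n h →
      A ≤ 2 * partErr G n g + 2 * partErr H n h := fun g h hg hh => by
    obtain ⟨m, t, hm, ht, hle⟩ := exists_partErr_add_le hGm hHm hGpos hHpos hg hh
    exact (An_sq_antitone (hGm.add hHm) ht.one_le hm).trans ((An_sq_le_partErr ht).trans hle)
  have hH : ∀ h, IsPartition n h → (A - 2 * An G n ^ 2) / 2 ≤ partErr H n h := fun h hh => by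
    have := le_An_sq hn fun g hg => (by linarith [hpair g h hg hh] :
      (A - 2 * partErr H n h) / 2 ≤ partErr G n g)
    linarith
  linarith [le_An_sq hn hH]
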